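/- Suppose every vertex of G has degree at least 2 and m > n. Then for every λ ∈ ℂ with |λ| = 1, the algebraic multiplicity of λ (its multiplicity as a root of the characteristic polynomial of B) equals its geometric multiplicity dim ker(B − λI); equivalently, ker((B − λI)²) = ker(B − λI), so no eigenvalue of modulus 1 is defective. -/

import Mathlib

open Matrix Polynomial BigOperators

variable {V : Type*}

/-- The non-backtracking matrix of a graph `G`, indexed by darts (oriented edges):
`B[(k→l),(i→j)] = 1` if `j = k` and `i ≠ l`, else `0`. -/
def nbMatrix [DecidableEq V] (G : SimpleGraph V) : Matrix G.Dart G.Dart ℂ :=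
  fun e f => if f.snd = e.fst ∧ f.fst ≠ e.snd then 1 else 0

/-! If `(B - μ)² x = 0`, put `y = (B - μ) x` and let `t v` be the sum of `y` over the darts
entering `v`, so that `y (ē) = t (e.fst) - μ y e`. Flipping darts preserves `‖y‖²`; expanding
this gives `∑ (deg v - 2) |t v|² = 0`, so `t` vanishes at every vertex of degree at least `3`.
For `μ = ±1`, `t` propagates along edges as `t b = μ t a`; a vertex of degree at least `3`
exists because `m > n`, so connectivity gives `t = 0`. Otherwise, the symmetry of the adjacency
operator, applied to the in-sums of `x` and `y`, gives `(μ - μ̄) ∑ |t v|² = 0`.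
Once `t = 0` we have `y (ē) = -μ y e`. Applying this twice gives `y = μ² y`, which settles
`μ² ≠ 1`; for `μ = ±1` the identity `Bᵀ = P B P` (`P` the flip) makes `y` orthogonal to
`P y = -μ y`. Hence `ker (B - μ)² = ker (B - μ)`, and then the maximal generalized eigenspace,
whose dimension is the algebraic multiplicity, is the eigenspace. -/

open Finset ComplexConjugate

theorem Module.End.maxGenEigenspace_eq_eigenspace_of_ker_sq_eq {K M : Type*} [Field K]
    [AddCommGroup M] [Module K M] {f : Module.End K M} {μ : K}
    (h : LinearMap.ker ((f - μ • 1) ^ 2) = LinearMap.ker (f - μ • 1)) :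
    f.maxGenEigenspace μ = f.eigenspace μ := by
  refine le_antisymm (fun x hx => ?_) eigenspace_le_maxGenEigenspace
  obtain ⟨k, hk⟩ := (mem_maxGenEigenspace f μ x).mp hx
  rw [eigenspace_def]
  cases k with
  | zero => simp_all
  | succ k =>
    rw [← pow_one (f - μ • 1), ker_pow_constant (k := 1) (by rw [pow_one, h]) k, add_comm]
    exact hk

theorem Matrix.rootMultiplicity_charpoly_eq_finrank_ker_of_ker_sq_eq {n K : Type*} [Fintype n]
    [DecidableEq n] [Field K] (A : Matrix n n K) (μ : K)
    (h : LinearMap.ker ((A - μ • 1) ^ 2).mulVecLin = LinearMap.ker (A - μ • 1).mulVecLin) :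
    A.charpoly.rootMultiplicity μ = Module.finrank K (LinearMap.ker (A - μ • 1).mulVecLin) := by
  have hlin : ∀ k : ℕ, ((A - μ • 1) ^ k).mulVecLin = (A.toLin' - μ • 1) ^ k := fun k => by
    change toLinAlgEquiv' _ = _
    rw [map_pow, map_sub, map_smul, map_one]
    rfl
  have h1 : (A - μ • 1).mulVecLin = A.toLin' - μ • 1 := by simpa using hlin 1
  rw [hlin, h1] at h
  rw [← A.charpoly_toLin', ← LinearMap.finrank_maxGenEigenspace_eq,
    Module.End.maxGenEigenspace_eq_eigenspace_of_ker_sq_eq h, Module.End.eigenspace_def, h1]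

lemma Complex.mul_eq_zero_of_sum_mul_mul_conj_eq_zero {ι : Type*} [Fintype ι] {w : ι → ℝ}
    (hw : ∀ i, 0 ≤ w i) {z : ι → ℂ} (h : ∑ i, (w i : ℂ) * (z i * conj (z i)) = 0) (i : ι) :
    (w i : ℂ) * z i = 0 := by
  simp only [Complex.mul_conj] at h
  norm_cast at h
  have hi := (sum_eq_zero_iff_of_nonneg fun j _ => mul_nonneg (hw j) (Complex.normSq_nonneg _)).mp
    h i (mem_univ i)
  rcases mul_eq_zero.mp hi with hwi | hzi
  · simp [hwi]
  · simp [Complex.normSq_eq_zero.mp hzi]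

namespace SimpleGraph

lemma Preconnected.forall_of_forall_adj {G : SimpleGraph V} (hG : G.Preconnected)
    {p : V → Prop} (hp : ∀ a b, G.Adj a b → p a → p b) {u : V} (hu : p u) (v : V) : p v := by
  induction (reachable_iff_reflTransGen u v).mp (hG u v) with
  | refl => exact hu
  | tail _ hab ih => exact hp _ _ hab ih

variable {R : Type*} [Fintype V] {G : SimpleGraph V} [DecidableRel G.Adj]

lemma exists_two_lt_degree_of_card_lt (h : Fintype.card V < #G.edgeFinset) :
    ∃ v, 2 < G.degree v := by
  by_contra! hle
  have hsum : ∑ v, G.degree v ≤ ∑ _v : V, 2 := sum_le_sum fun v _ => hle v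
  rw [sum_degrees_eq_twice_card_edges, sum_const, card_univ, smul_eq_mul] at hsum
  omega

lemma sum_dart_symm [AddCommMonoid R] (f : G.Dart → R) : ∑ e : G.Dart, f e.symm = ∑ e, f e :=
  Dart.symm_involutive.bijective.sum_comp f

variable [DecidableEq V]

variable (G) in
def inSum [AddCommMonoid R] (z : G.Dart → R) (v : V) : R := ∑ e with e.snd = v, z e

variable (G) in
def outSum [AddCommMonoid R] (z : G.Dart → R) (v : V) : R := ∑ e with e.fst = v, z e

@[simp]
lemma inSum_zero [AddCommMonoid R] (v : V) : G.inSum (0 : G.Dart → R) v = 0 :=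
  sum_const_zero

@[simp]
lemma outSum_zero [AddCommMonoid R] (v : V) : G.outSum (0 : G.Dart → R) v = 0 :=
  sum_const_zero

lemma outSum_comp_symm [AddCommMonoid R] (z : G.Dart → R) (v : V) :
    G.outSum (fun e => z e.symm) v = G.inSum z v :=
  sum_nbij' Dart.symm Dart.symm (by simp) (by simp) (by simp) (by simp) (by simp)

lemma inSum_comp_symm [AddCommMonoid R] (z : G.Dart → R) (v : V) :
    G.inSum (fun e => z e.symm) v = G.outSum z v := by
  rw [← outSum_comp_symm]; simp

lemma sum_inSum_mul [NonUnitalNonAssocSemiring R] (z : G.Dart → R) (f : V → R) :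
    ∑ v, G.inSum z v * f v = ∑ e, z e * f e.snd := by
  simp only [inSum, sum_mul]
  rw [← sum_fiberwise univ (fun e : G.Dart => e.snd) (fun e => z e * f e.snd)]
  refine sum_congr rfl fun v _ => sum_congr rfl fun e he => ?_
  rw [(mem_filter.mp he).2]

lemma sum_outSum_mul [NonUnitalNonAssocSemiring R] (z : G.Dart → R) (f : V → R) :
    ∑ v, G.outSum z v * f v = ∑ e, z e * f e.fst := by
  simp only [← inSum_comp_symm, sum_inSum_mul]
  exact sum_dart_symm (fun e => z e * f e.fst)

lemma outSum_comp_fst [NonAssocSemiring R] (f : V → R) (v : V) :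
    G.outSum (fun e => f e.fst) v = G.degree v * f v := by
  rw [outSum, sum_congr rfl fun e he => by rw [(mem_filter.mp he).2], sum_const,
    dart_fst_fiber_card_eq_degree, nsmul_eq_mul]

lemma sum_comp_fst [NonAssocSemiring R] (f : V → R) :
    ∑ e : G.Dart, f e.fst = ∑ v, G.degree v * f v := by
  rw [← sum_fiberwise univ (fun e : G.Dart => e.fst) (fun e => f e.fst)]
  exact sum_congr rfl fun v _ => outSum_comp_fst f v

lemma sum_inSum_comp_fst_mul [CommSemiring R] (f g : V → R) :
    ∑ v, G.inSum (fun e => f e.fst) v * g v = ∑ v, f v * G.inSum (fun e => g e.fst) v := by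
  simp only [sum_inSum_mul, mul_comm (f _)]
  exact (sum_dart_symm _).symm

end SimpleGraph

namespace nbMatrix

open SimpleGraph

variable [DecidableEq V] {G : SimpleGraph V}

lemma apply_symm_symm (e f : G.Dart) : nbMatrix G f.symm e.symm = nbMatrix G e f := by
  simp only [nbMatrix, Dart.symm_toProd, Prod.fst_swap, Prod.snd_swap, eq_comm, ne_comm]

variable [Fintype V] [DecidableRel G.Adj]

lemma mulVec_apply (z : G.Dart → ℂ) (e : G.Dart) :
    (nbMatrix G *ᵥ z) e = G.inSum z e.fst - z e.symm := by
  have hcond : ∀ f : G.Dart, (f.snd = e.fst ∧ f.fst ≠ e.snd) ↔ (f.snd = e.fst ∧ f ≠ e.symm) :=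
    fun f => and_congr_right fun h => not_congr
      ⟨fun h' => Dart.ext _ _ (Prod.ext h' h), fun h' => h' ▸ rfl⟩
  have hmem : e.symm ∈ ({f | f.snd = e.fst} : Finset G.Dart) := by simp
  simp only [mulVec, dotProduct, nbMatrix, ite_mul, one_mul, zero_mul, hcond]
  rw [← sum_filter, ← filter_filter, filter_ne', sum_erase_eq_sub hmem, inSum]

lemma sum_mulVec_mul_symm (x w : G.Dart → ℂ) :
    ∑ e, (nbMatrix G *ᵥ x) e * w e.symm = ∑ e, x e * (nbMatrix G *ᵥ w) e.symm := by
  simp only [mulVec, dotProduct, sum_mul, mul_sum]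
  rw [sum_comm]
  refine sum_congr rfl fun f _ => ?_
  rw [← sum_dart_symm (fun e => x f * (nbMatrix G f.symm e * w e))]
  refine sum_congr rfl fun e _ => ?_
  rw [apply_symm_symm]
  ring

lemma star_mulVec (z : G.Dart → ℂ) : star (nbMatrix G *ᵥ z) = nbMatrix G *ᵥ star z := by
  ext e
  simp [mulVec_apply, inSum]

variable {μ : ℂ} {z w : G.Dart → ℂ}

lemma mulVec_eq_of_sub_smul_mulVec_eq (h : (nbMatrix G - μ • 1) *ᵥ z = w) :
    nbMatrix G *ᵥ z = μ • z + w := by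
  rw [← h, sub_mulVec, smul_mulVec, one_mulVec]
  abel

lemma apply_symm_of_sub_smul_mulVec_eq (h : (nbMatrix G - μ • 1) *ᵥ z = w) (e : G.Dart) :
    z e.symm = G.inSum z e.fst - μ * z e - w e := by
  have he := congrFun (mulVec_eq_of_sub_smul_mulVec_eq h) e
  rw [mulVec_apply, Pi.add_apply, Pi.smul_apply, smul_eq_mul] at he
  linear_combination -he

lemma mul_outSum_of_sub_smul_mulVec_eq (h : (nbMatrix G - μ • 1) *ᵥ z = w) (v : V) :
    μ * G.outSum z v = (G.degree v - 1) * G.inSum z v - G.outSum w v := by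
  have hv := congrArg (fun f => G.outSum f v) (funext (apply_symm_of_sub_smul_mulVec_eq h))
  have hdeg := outSum_comp_fst (G := G) (G.inSum z) v
  simp only [outSum_comp_symm] at hv
  simp only [outSum, sum_sub_distrib, ← mul_sum] at hv hdeg ⊢
  linear_combination hv + hdeg

lemma inSum_inSum_fst_of_sub_smul_mulVec_eq (h : (nbMatrix G - μ • 1) *ᵥ z = w) (v : V) :
    G.inSum (fun e => G.inSum z e.fst) v = G.outSum z v + μ * G.inSum z v + G.inSum w v := by
  have hv := congrArg (fun f => G.inSum f v) (funext (apply_symm_of_sub_smul_mulVec_eq h))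
  simp only [inSum_comp_symm] at hv
  simp only [inSum, outSum, sum_sub_distrib, ← mul_sum] at hv ⊢
  linear_combination -hv

variable {y : G.Dart → ℂ}

lemma sum_degree_sub_two_mul_inSum_mul_conj_eq_zero (hμ : ‖μ‖ = 1)
    (hy : (nbMatrix G - μ • 1) *ᵥ y = 0) :
    ∑ v, ((G.degree v : ℂ) - 2) * (G.inSum y v * conj (G.inSum y v)) = 0 := by
  set t := G.inSum y
  have hμμ : μ * conj μ = 1 := by simp [Complex.mul_conj', hμ]
  have hflip e : y e.symm = t e.fst - μ * y e := by
    simpa using apply_symm_of_sub_smul_mulVec_eq hy e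
  have hout v : μ * G.outSum y v = (G.degree v - 1) * t v := by
    simpa using mul_outSum_of_sub_smul_mulVec_eq hy v
  have hcross : ∑ e, μ * y e * conj (t e.fst)
      = ∑ v, ((G.degree v : ℂ) - 1) * (t v * conj (t v)) := by
    rw [← sum_outSum_mul (fun e => μ * y e) (fun v => conj (t v))]
    refine sum_congr rfl fun v _ => ?_
    rw [outSum, ← mul_sum, ← outSum, hout, mul_assoc]
  have hcross' : ∑ e, conj μ * (t e.fst * conj (y e))
      = ∑ v, ((G.degree v : ℂ) - 1) * (t v * conj (t v)) := by
    have := congrArg conj hcross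
    simp only [map_sum, map_mul, map_sub, map_one, map_natCast, Complex.conj_conj] at this
    convert this using 2 <;> ring
  have hsq : ∑ e : G.Dart, t e.fst * conj (t e.fst)
      = ∑ v, (G.degree v : ℂ) * (t v * conj (t v)) :=
    sum_comp_fst fun v => t v * conj (t v)
  have hnorm : ∑ e : G.Dart, y e.symm * conj (y e.symm) = ∑ e, y e * conj (y e) :=
    sum_dart_symm fun e => y e * conj (y e)
  have hexpand e : y e.symm * conj (y e.symm) = t e.fst * conj (t e.fst)
      - μ * y e * conj (t e.fst) - conj μ * (t e.fst * conj (y e)) + y e * conj (y e) := by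
    rw [hflip e, map_sub, map_mul]
    linear_combination y e * conj (y e) * hμμ
  simp only [hexpand, sum_add_distrib, sum_sub_distrib, hsq, hcross, hcross'] at hnorm
  have h0 := add_eq_right.mp hnorm
  rw [← sum_sub_distrib, ← sum_sub_distrib] at h0
  rw [← neg_eq_zero, ← h0, ← sum_neg_distrib]
  exact sum_congr rfl fun v _ => by ring

lemma degree_sub_two_mul_inSum_eq_zero (hdeg : ∀ u, 2 ≤ G.degree u) (hμ : ‖μ‖ = 1)
    (hy : (nbMatrix G - μ • 1) *ᵥ y = 0) (v : V) :
    ((G.degree v : ℂ) - 2) * G.inSum y v = 0 := by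
  have hw u : (0 : ℝ) ≤ G.degree u - 2 := sub_nonneg.mpr (by exact_mod_cast hdeg u)
  exact_mod_cast Complex.mul_eq_zero_of_sum_mul_mul_conj_eq_zero hw
    (by exact_mod_cast sum_degree_sub_two_mul_inSum_mul_conj_eq_zero hμ hy) v

lemma mul_outSum_eq_inSum (hdeg : ∀ u, 2 ≤ G.degree u) (hμ : ‖μ‖ = 1)
    (hy : (nbMatrix G - μ • 1) *ᵥ y = 0) (v : V) : μ * G.outSum y v = G.inSum y v := by
  have h := mul_outSum_of_sub_smul_mulVec_eq hy v
  rw [outSum_zero, sub_zero] at h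
  linear_combination h + degree_sub_two_mul_inSum_eq_zero hdeg hμ hy v

lemma inSum_snd_eq_mul_inSum_fst (hμ : μ ^ 2 = 1) (hy : (nbMatrix G - μ • 1) *ᵥ y = 0)
    (e : G.Dart) : G.inSum y e.snd = μ * G.inSum y e.fst := by
  have h₁ := apply_symm_of_sub_smul_mulVec_eq hy e
  have h₂ := apply_symm_of_sub_smul_mulVec_eq hy e.symm
  simp only [Dart.symm_symm, Dart.symm_toProd, Prod.fst_swap, Pi.zero_apply, sub_zero] at h₁ h₂
  linear_combination -h₂ + μ * h₁ - y e * hμ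

lemma inSum_eq_zero_of_sq_eq_one (hconn : G.Connected) (hdeg : ∀ u, 2 ≤ G.degree u)
    (hm : Fintype.card V < #G.edgeFinset) (hμ : μ ^ 2 = 1)
    (hy : (nbMatrix G - μ • 1) *ᵥ y = 0) (v : V) : G.inSum y v = 0 := by
  have hμ₁ : ‖μ‖ = 1 := by
    have h := congrArg norm hμ
    rw [norm_pow, norm_one] at h
    exact (pow_eq_one_iff_of_nonneg (norm_nonneg μ) two_ne_zero).mp h
  obtain ⟨v₀, hv₀⟩ := exists_two_lt_degree_of_card_lt hm
  have h₀ : G.inSum y v₀ = 0 := by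
    refine (mul_eq_zero.mp (degree_sub_two_mul_inSum_eq_zero hdeg hμ₁ hy v₀)).resolve_left ?_
    rw [sub_eq_zero]
    exact_mod_cast hv₀.ne'
  refine hconn.preconnected.forall_of_forall_adj (p := fun u => G.inSum y u = 0)
    (fun a b hab ha => ?_) h₀ v
  exact (inSum_snd_eq_mul_inSum_fst hμ hy ⟨(a, b), hab⟩).trans (by simp [ha])

lemma inSum_eq_zero_of_sq_ne_one (hdeg : ∀ u, 2 ≤ G.degree u) (hμ : ‖μ‖ = 1) (hμ₂ : μ ^ 2 ≠ 1)
    {x : G.Dart → ℂ} (hx : (nbMatrix G - μ • 1) *ᵥ x = y)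
    (hy : (nbMatrix G - μ • 1) *ᵥ y = 0) (v : V) : G.inSum y v = 0 := by
  have hμμ : μ * conj μ = 1 := by simp [Complex.mul_conj', hμ]
  have hconj : μ - conj μ ≠ 0 := fun h => hμ₂ (by linear_combination μ * h + hμμ)
  have hpoint u : μ * (G.inSum (fun e => G.inSum x e.fst) u * conj (G.inSum y u))
      - μ * (G.inSum x u * G.inSum (fun e => conj (G.inSum y e.fst)) u)
      = (μ - conj μ) * (G.inSum y u * conj (G.inSum y u)) := by
    have hAs := inSum_inSum_fst_of_sub_smul_mulVec_eq hx u
    have hAt := congrArg conj (inSum_inSum_fst_of_sub_smul_mulVec_eq hy u)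
    have hus := mul_outSum_of_sub_smul_mulVec_eq hx u
    have hut := mul_outSum_eq_inSum hdeg hμ hy u
    have hdt := congrArg conj (degree_sub_two_mul_inSum_eq_zero hdeg hμ hy u)
    have hut' := congrArg conj hut
    have hconjA : conj (G.inSum (fun e => G.inSum y e.fst) u)
        = G.inSum (fun e => conj (G.inSum y e.fst)) u :=
      map_sum _ _ _
    rw [inSum_zero, add_zero, map_add, map_mul, hconjA] at hAt
    rw [map_mul, map_sub, map_natCast, map_ofNat, map_zero] at hdt
    rw [map_mul] at hut'
    rw [hAs, hAt]
    linear_combination conj (G.inSum y u) * hus - conj μ * conj (G.inSum y u) * hut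
      + (G.outSum y u * conj (G.inSum y u) + μ * G.inSum x u * conj (G.outSum y u)
        - G.inSum x u * conj (G.inSum y u)) * hμμ
      - μ ^ 2 * G.inSum x u * hut' + G.inSum x u * hdt
  have hsum : (μ - conj μ) * ∑ u, G.inSum y u * conj (G.inSum y u) = 0 := by
    rw [mul_sum, ← sum_congr rfl fun u _ => hpoint u, sum_sub_distrib, ← mul_sum, ← mul_sum,
      sum_inSum_comp_fst_mul, sub_self]
  have ht := Complex.mul_eq_zero_of_sum_mul_mul_conj_eq_zero (w := 1) (fun _ => zero_le_one)
    (z := G.inSum y) (by simpa using (mul_eq_zero.mp hsum).resolve_left hconj) v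
  simpa using ht

lemma eq_zero_of_inSum_eq_zero (hμ : ‖μ‖ = 1) {x : G.Dart → ℂ}
    (hx : (nbMatrix G - μ • 1) *ᵥ x = y) (hy : (nbMatrix G - μ • 1) *ᵥ y = 0)
    (ht : ∀ v, G.inSum y v = 0) : y = 0 := by
  have hflip e : y e.symm = -(μ * y e) := by
    simpa [ht] using apply_symm_of_sub_smul_mulVec_eq hy e
  by_cases hμ₂ : μ ^ 2 = 1
  · have hreal : conj μ = μ := by
      rw [← Complex.inv_eq_conj hμ]
      exact inv_eq_of_mul_eq_one_right (by rw [← sq, hμ₂])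
    have hμ₀ : μ ≠ 0 := by rintro rfl; simp at hμ
    have horth : ∑ e, y e * conj (y e.symm) = 0 := by
      have h := sum_mulVec_mul_symm x (star y)
      rw [← star_mulVec, mulVec_eq_of_sub_smul_mulVec_eq hx,
        mulVec_eq_of_sub_smul_mulVec_eq hy] at h
      simp only [Pi.add_apply, Pi.smul_apply, Pi.star_apply, smul_eq_mul, add_zero, star_mul',
        add_mul, sum_add_distrib, Complex.star_def, hreal, mul_assoc, ← mul_sum] at h
      calc ∑ e, y e * conj (y e.symm)
          = ∑ e, x e * (μ * conj (y e.symm)) - μ * ∑ e, x e * conj (y e.symm) := by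
            rw [← h]; ring
        _ = 0 := by rw [mul_sum, sub_eq_zero]; exact sum_congr rfl fun _ _ => by ring
    have hsum : -μ * ∑ e, y e * conj (y e) = 0 := by
      rw [mul_sum, ← horth]
      exact sum_congr rfl fun e _ => by rw [hflip, map_neg, map_mul, hreal]; ring
    have hnorm := Complex.mul_eq_zero_of_sum_mul_mul_conj_eq_zero (w := 1) (fun _ => zero_le_one)
      (z := y) (by simpa [hμ₀] using hsum)
    funext e
    simpa using hnorm e
  · funext e
    have he := hflip e.symm
    rw [Dart.symm_symm, hflip e] at he
    have : (1 - μ ^ 2) * y e = 0 := by linear_combination he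
    exact (mul_eq_zero.mp this).resolve_left (sub_ne_zero.mpr (Ne.symm hμ₂))

theorem sub_smul_mulVec_eq_zero_of_sq_mulVec_eq_zero (hconn : G.Connected)
    (hdeg : ∀ u, 2 ≤ G.degree u) (hm : Fintype.card V < #G.edgeFinset) (hμ : ‖μ‖ = 1)
    {x : G.Dart → ℂ} (h : ((nbMatrix G - μ • 1) ^ 2) *ᵥ x = 0) :
    (nbMatrix G - μ • 1) *ᵥ x = 0 := by
  have hy : (nbMatrix G - μ • 1) *ᵥ ((nbMatrix G - μ • 1) *ᵥ x) = 0 := by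
    rwa [mulVec_mulVec, ← sq]
  refine eq_zero_of_inSum_eq_zero hμ rfl hy fun v => ?_
  by_cases hμ₂ : μ ^ 2 = 1
  · exact inSum_eq_zero_of_sq_eq_one hconn hdeg hm hμ₂ hy v
  · exact inSum_eq_zero_of_sq_ne_one hdeg hμ hμ₂ rfl hy v

end nbMatrix

theorem nbMatrix_unit_eigenvalue_not_defective
    [DecidableEq V] [Fintype V] (G : SimpleGraph V) [DecidableRel G.Adj]
    (hconn : G.Connected) (hdeg : ∀ u : V, 2 ≤ G.degree u)
    (hm : Fintype.card V < G.edgeFinset.card)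
    (μ : ℂ) (hμ : ‖μ‖ = 1) :
    (nbMatrix G).charpoly.rootMultiplicity μ
      = Module.finrank ℂ ↥(LinearMap.ker (nbMatrix G - μ • 1).mulVecLin) ∧
    LinearMap.ker (((nbMatrix G - μ • 1) ^ 2).mulVecLin)
      = LinearMap.ker ((nbMatrix G - μ • 1).mulVecLin) := by
  have hker : LinearMap.ker (((nbMatrix G - μ • 1) ^ 2).mulVecLin)
      = LinearMap.ker ((nbMatrix G - μ • 1).mulVecLin) := by
    refine le_antisymm (fun x hx => ?_) ?_
    · exact nbMatrix.sub_smul_mulVec_eq_zero_of_sq_mulVec_eq_zero hconn hdeg hm hμ hx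
    · rw [sq, mulVecLin_mul]
      exact LinearMap.ker_le_ker_comp _ _
  exact ⟨(nbMatrix G).rootMultiplicity_charpoly_eq_finrank_ker_of_ker_sq_eq μ hker, hker⟩
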